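/- arXiv:2410.06716 — 2 statements merged into one kernel-verified Lean document; each statement's English description precedes it below -/
import Mathlib

section
/- GUARD core identity: KL(g ‖ a') = KL(g ‖ g') + KL(g' ‖ a') = KL(g ‖ g') − log AR_{a'}, where g and g' are the b-filtered versions of a and a' respectively and AR_{a'} = ∑_y a'(y)·b(y). -/
open BigOperators

noncomputable def KL {Y : Type*} [Fintype Y] (p q : Y → ℝ) : ℝ :=
  ∑ y, if 0 < p y then p y * Real.log (p y / q y) else 0

theorem guard_core_identity {Y : Type*} [Fintype Y]
    (a a' b g g' : Y → ℝ)
    (ha0 : ∀ y, 0 ≤ a y) (ha1 : ∑ y, a y = 1)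
    (ha'0 : ∀ y, 0 < a' y) (ha'1 : ∑ y, a' y = 1)
    (hb : ∀ y, b y = 0 ∨ b y = 1)
    (hZ : 0 < ∑ y, a y * b y) (hZ' : 0 < ∑ y, a' y * b y)
    (hg : ∀ y, g y = a y * b y / (∑ y', a y' * b y'))
    (hg' : ∀ y, g' y = a' y * b y / (∑ y', a' y' * b y')) :
    KL g a' = KL g g' + KL g' a' ∧
    KL g a' = KL g g' - Real.log (∑ y, a' y * b y) := by
  set Z : ℝ := ∑ y, a y * b y with hZdef
  set Z' : ℝ := ∑ y, a' y * b y with hZ'def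
  have hbg : ∀ y, 0 < g y → b y = 1 := by
    intro y hy
    rcases hb y with h | h
    · exfalso; rw [hg y, h] at hy; simp at hy
    · exact h
  have hbg' : ∀ y, 0 < g' y → b y = 1 := by
    intro y hy
    rcases hb y with h | h
    · exfalso; rw [hg' y, h] at hy; simp at hy
    · exact h
  have hgnn : ∀ y, 0 ≤ g y := by
    intro y; rw [hg y]
    have : 0 ≤ b y := by rcases hb y with h | h <;> simp [h]
    exact div_nonneg (mul_nonneg (ha0 y) this) hZ.le
  have hg'nn : ∀ y, 0 ≤ g' y := by
    intro y; rw [hg' y]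
    have : 0 ≤ b y := by rcases hb y with h | h <;> simp [h]
    exact div_nonneg (mul_nonneg (ha'0 y).le this) hZ'.le
  have hsum_g : ∑ y, (if 0 < g y then g y else 0) = 1 := by
    have h1 : ∑ y, (if 0 < g y then g y else 0) = ∑ y, g y := by
      apply Finset.sum_congr rfl
      intro y _
      by_cases hy : 0 < g y
      · simp [hy]
      · simp [hy, le_antisymm (not_lt.mp hy) (hgnn y)]
    rw [h1]
    have : ∑ y, g y = (∑ y, a y * b y) / Z := by
      rw [Finset.sum_div]
      exact Finset.sum_congr rfl fun y _ => hg y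
    rw [this, div_self hZ.ne']
  have hsum_g' : ∑ y, (if 0 < g' y then g' y else 0) = 1 := by
    have h1 : ∑ y, (if 0 < g' y then g' y else 0) = ∑ y, g' y := by
      apply Finset.sum_congr rfl
      intro y _
      by_cases hy : 0 < g' y
      · simp [hy]
      · simp [hy, le_antisymm (not_lt.mp hy) (hg'nn y)]
    rw [h1]
    have : ∑ y, g' y = (∑ y, a' y * b y) / Z' := by
      rw [Finset.sum_div]
      exact Finset.sum_congr rfl fun y _ => hg' y
    rw [this, div_self hZ'.ne']
  have hKLg'a' : KL g' a' = -Real.log Z' := by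
    have key : ∀ y, (if 0 < g' y then g' y * Real.log (g' y / a' y) else 0)
        = (if 0 < g' y then g' y else 0) * (-Real.log Z') := by
      intro y
      by_cases hy : 0 < g' y
      · have hb1 := hbg' y hy
        have hgy : g' y = a' y / Z' := by rw [hg' y, hb1, mul_one]
        have ha'y := ha'0 y
        have h1 : g' y / a' y = 1 / Z' := by
          rw [hgy]; field_simp
        simp only [hy, if_true, h1]
        rw [one_div, Real.log_inv]
      · simp [hy]
    unfold KL
    rw [Finset.sum_congr rfl fun y _ => key y, ← Finset.sum_mul, hsum_g', one_mul]
  have hmain : KL g a' = KL g g' - Real.log Z' := by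
    have key : ∀ y, (if 0 < g y then g y * Real.log (g y / a' y) else 0)
        = (if 0 < g y then g y * Real.log (g y / g' y) else 0)
          + (if 0 < g y then g y else 0) * (-Real.log Z') := by
      intro y
      by_cases hy : 0 < g y
      · have hb1 := hbg y hy
        have ha'y := ha'0 y
        have hg'y : g' y = a' y / Z' := by rw [hg' y, hb1, mul_one]
        have hg'pos : 0 < g' y := by rw [hg'y]; positivity
        simp only [hy, if_true]
        rw [Real.log_div hy.ne' ha'y.ne', Real.log_div hy.ne' hg'pos.ne', hg'y,
          Real.log_div ha'y.ne' hZ'.ne']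
        ring
      · simp [hy]
    unfold KL
    rw [Finset.sum_congr rfl fun y _ => key y, Finset.sum_add_distrib,
      ← Finset.sum_mul, hsum_g, one_mul]
    ring
  exact ⟨by rw [hmain, hKLg'a']; ring, hmain⟩
end

section
/- KL(g ‖ a') upper-bounds both the divergence of the sampler from the gold model and the log-inefficiency of rejection sampling: KL(g ‖ g') ≤ KL(g ‖ a') and −log AR_{a'} ≤ KL(g ‖ a'). -/
open BigOperators

lemma gibbs {Y : Type*} [Fintype Y] (p q : Y → ℝ)
    (hp : ∀ y, 0 ≤ p y) (hpq : ∀ y, 0 < p y → 0 < q y)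
    (hp1 : ∑ y, p y = 1) (hq1 : ∑ y, q y ≤ 1) (hq0 : ∀ y, 0 ≤ q y) :
    0 ≤ KL p q := by
  have h1 : ∑ y, (if 0 < p y then p y - q y else 0) ≤ KL p q := by
    apply Finset.sum_le_sum
    intro y _
    by_cases h : 0 < p y
    · simp only [h, if_true]
      have hqy := hpq y h
      have hx := Real.log_le_sub_one_of_pos (show 0 < q y / p y from div_pos hqy h)
      have hlog : 1 - q y / p y ≤ Real.log (p y / q y) := by
        rw [Real.log_div (ne_of_gt hqy) (ne_of_gt h)] at hx
        rw [Real.log_div (ne_of_gt h) (ne_of_gt hqy)]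
        linarith
      calc p y - q y = p y * (1 - q y / p y) := by field_simp
        _ ≤ p y * Real.log (p y / q y) :=
            mul_le_mul_of_nonneg_left hlog (le_of_lt h)
    · simp [h]
  have h2 : ∑ y, (if 0 < p y then p y - q y else 0)
      = (∑ y, (if 0 < p y then p y else 0)) - ∑ y, (if 0 < p y then q y else 0) := by
    rw [← Finset.sum_sub_distrib]
    apply Finset.sum_congr rfl
    intro y _
    by_cases h : 0 < p y <;> simp [h]
  have h3 : ∑ y, (if 0 < p y then p y else 0) = 1 := by
    rw [← hp1]
    apply Finset.sum_congr rfl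
    intro y _
    by_cases h : 0 < p y
    · simp [h]
    · have := hp y
      simp [h]
      linarith
  have h4 : ∑ y, (if 0 < p y then q y else 0) ≤ ∑ y, q y := by
    apply Finset.sum_le_sum
    intro y _
    by_cases h : 0 < p y <;> simp [h, hq0 y]
  linarith

theorem KL_upper_bounds {Y : Type*} [Fintype Y]
    (a a' b g g' : Y → ℝ)
    (ha0 : ∀ y, 0 ≤ a y) (ha1 : ∑ y, a y = 1)
    (ha'0 : ∀ y, 0 < a' y) (ha'1 : ∑ y, a' y = 1)
    (hb : ∀ y, b y = 0 ∨ b y = 1)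
    (hZ : 0 < ∑ y, a y * b y) (hAR : 0 < ∑ y, a' y * b y)
    (hg : ∀ y, g y = a y * b y / (∑ y', a y' * b y'))
    (hg' : ∀ y, g' y = a' y * b y / (∑ y', a' y' * b y')) :
    KL g g' ≤ KL g a' ∧ - Real.log (∑ y, a' y * b y) ≤ KL g a' := by
  set Z := ∑ y, a y * b y with hZdef
  set AR := ∑ y, a' y * b y with hARdef
  have hb0 : ∀ y, 0 ≤ b y := by
    intro y; rcases hb y with h | h <;> rw [h] <;> norm_num
  have hb1' : ∀ y, b y ≤ 1 := by
    intro y; rcases hb y with h | h <;> rw [h] <;> norm_num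
  have hg_nonneg : ∀ y, 0 ≤ g y := by
    intro y; rw [hg y]
    exact div_nonneg (mul_nonneg (ha0 y) (hb0 y)) hZ.le
  have hsum_g : ∑ y, g y = 1 := by
    have : ∑ y, g y = (∑ y, a y * b y) / Z := by
      rw [Finset.sum_div]
      exact Finset.sum_congr rfl (fun y _ => hg y)
    rw [this, ← hZdef, div_self hZ.ne']
  have hb_pos : ∀ y, 0 < g y → b y = 1 := by
    intro y h
    rcases hb y with h0 | h1
    · rw [hg y, h0] at h; simp at h
    · exact h1
  have hg'_eq : ∀ y, 0 < g y → g' y = a' y / AR := by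
    intro y h
    rw [hg' y, hb_pos y h, mul_one]
  have hAR_le : AR ≤ 1 := by
    rw [← ha'1]
    apply Finset.sum_le_sum
    intro y _
    calc a' y * b y ≤ a' y * 1 :=
          mul_le_mul_of_nonneg_left (hb1' y) (ha'0 y).le
      _ = a' y := mul_one _
  have hlogAR : Real.log AR ≤ 0 := Real.log_nonpos hAR.le hAR_le
  -- key equality
  have key : KL g g' = KL g a' + Real.log AR := by
    unfold KL
    have heach : ∀ y, (if 0 < g y then g y * Real.log (g y / g' y) else 0)
        = (if 0 < g y then g y * Real.log (g y / a' y) else 0)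
          + (if 0 < g y then g y else 0) * Real.log AR := by
      intro y
      by_cases h : 0 < g y
      · simp only [h, if_true]
        rw [hg'_eq y h]
        have hdiv : g y / (a' y / AR) = g y / a' y * AR := by
          field_simp
        rw [hdiv, Real.log_mul (div_pos h (ha'0 y)).ne' hAR.ne']
        ring
      · simp [h]
    rw [Finset.sum_congr rfl (fun y _ => heach y), Finset.sum_add_distrib,
      ← Finset.sum_mul]
    have hsum : ∑ y, (if 0 < g y then g y else 0) = 1 := by
      rw [← hsum_g]
      apply Finset.sum_congr rfl
      intro y _
      by_cases h : 0 < g y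
      · simp [h]
      · have := hg_nonneg y
        simp [h]
        linarith
    rw [hsum, one_mul]
  -- Gibbs: 0 ≤ KL g g'
  have hsum_g' : ∑ y, g' y = 1 := by
    have : ∑ y, g' y = (∑ y, a' y * b y) / AR := by
      rw [Finset.sum_div]
      exact Finset.sum_congr rfl (fun y _ => hg' y)
    rw [this, ← hARdef, div_self hAR.ne']
  have hgibbs : 0 ≤ KL g g' := by
    apply gibbs g g' hg_nonneg _ hsum_g (le_of_eq hsum_g')
    · intro y
      rw [hg' y]
      exact div_nonneg (mul_nonneg (ha'0 y).le (hb0 y)) hAR.le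
    · intro y h
      rw [hg'_eq y h]
      exact div_pos (ha'0 y) hAR
  constructor
  · linarith
  · linarith
end
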